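/- Let Γ be the random bipartite graph, and let m, n ∈ ℕ with m, n > 2. There exists an integer s(m,n) such that for every f ∈ F(S_{l,r}(Γ)), if |dom(f) ∩ R_l| ≥ s(m,n) and |dom(f) ∩ R_r| ≥ s(m,n), then there exists an (m×n)-analysis of f. -/

import Mathlib

/-! Preamble: bipartite graphs, the random bipartite graph, side-preserving
permutation groups, switches, switch groups, and related notions. -/

/-- A bipartite graph on a vertex type `V`: the sides `left` and `right`
partition `V`, both sides are nonempty, and `adj` (the relation `P₁`) only holds
from `left` to `right`.  The relation `P₂` is the complement of `adj` on
`left × right`. -/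
structure BipartiteGraph (V : Type*) where
  left : Set V
  right : Set V
  adj : V → V → Prop
  left_nonempty : left.Nonempty
  right_nonempty : right.Nonempty
  union_eq : left ∪ right = Set.univ
  disjoint_sides : Disjoint left right
  adj_dom : ∀ a b, adj a b → a ∈ left ∧ b ∈ right

/-- The two sides of a bipartite graph. -/
inductive BSide : Type
  | l : BSide
  | r : BSide
deriving DecidableEq

namespace BipartiteGraph

variable {V : Type*} (Γ : BipartiteGraph V)

/-- The side of the graph indexed by an element of `BSide`. -/
def side : BSide → Set V
  | BSide.l => Γ.left
  | BSide.r => Γ.right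

/-- `Γ` is (isomorphic to) the random bipartite graph: it is countable, both
sides are infinite, and it satisfies the extension properties `Θₙ` for all `n`. -/
structure IsRandom : Prop where
  countable : Countable V
  left_infinite : Γ.left.Infinite
  right_infinite : Γ.right.Infinite
  ext_left : ∀ X₁ X₂ : Finset V, ↑X₁ ⊆ Γ.left → ↑X₂ ⊆ Γ.left → Disjoint X₁ X₂ →
      ∃ v ∈ Γ.right, (∀ x ∈ X₁, Γ.adj x v) ∧ (∀ x ∈ X₂, ¬ Γ.adj x v)
  ext_right : ∀ X₁ X₂ : Finset V, ↑X₁ ⊆ Γ.right → ↑X₂ ⊆ Γ.right → Disjoint X₁ X₂ →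
      ∃ v ∈ Γ.left, (∀ x ∈ X₁, Γ.adj v x) ∧ (∀ x ∈ X₂, ¬ Γ.adj v x)

/-- `Sym_{l,r}(Γ)`: the group of permutations of `V` preserving both sides. -/
def symLR : Subgroup (Equiv.Perm V) where
  carrier := {g | (∀ v, g v ∈ Γ.left ↔ v ∈ Γ.left) ∧ (∀ v, g v ∈ Γ.right ↔ v ∈ Γ.right)}
  one_mem' := ⟨fun _ => Iff.rfl, fun _ => Iff.rfl⟩
  mul_mem' := by
    rintro a b ⟨hal, har⟩ ⟨hbl, hbr⟩
    exact ⟨fun v => (hal (b v)).trans (hbl v), fun v => (har (b v)).trans (hbr v)⟩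
  inv_mem' := by
    rintro a ⟨hal, har⟩
    refine ⟨fun v => ?_, fun v => ?_⟩
    · have h := hal (a⁻¹ v); rw [show a (a⁻¹ v) = v from a.apply_symm_apply v] at h; exact h.symm
    · have h := har (a⁻¹ v); rw [show a (a⁻¹ v) = v from a.apply_symm_apply v] at h; exact h.symm

/-- The automorphism group of `Γ`: side-preserving permutations preserving `adj`
(and hence both cross-types). -/
def autGroup : Subgroup (Equiv.Perm V) where
  carrier := {g | g ∈ Γ.symLR ∧ ∀ a b, Γ.adj a b ↔ Γ.adj (g a) (g b)}
  one_mem' := ⟨Γ.symLR.one_mem, fun _ _ => Iff.rfl⟩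
  mul_mem' := by
    rintro a b ⟨ha, ha2⟩ ⟨hb, hb2⟩
    exact ⟨mul_mem ha hb, fun x y => (hb2 x y).trans (ha2 (b x) (b y))⟩
  inv_mem' := by
    rintro a ⟨ha, ha2⟩
    refine ⟨inv_mem ha, fun x y => ?_⟩
    have h := ha2 (a⁻¹ x) (a⁻¹ y)
    rw [show a (a⁻¹ x) = x from a.apply_symm_apply x,
      show a (a⁻¹ y) = y from a.apply_symm_apply y] at h
    exact h.symm

/-- A permutation `g` is a switch with respect to a set `A` if it preserves the
sides and, for every cross-edge `(a, b)`, the cross-type of `(a, b)` is preserved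
if and only if `|{a, b} ∩ A| ≠ 1`. -/
def IsSwitch (g : Equiv.Perm V) (A : Set V) : Prop :=
  g ∈ Γ.symLR ∧ ∀ a ∈ Γ.left, ∀ b ∈ Γ.right,
    ((Γ.adj a b ↔ Γ.adj (g a) (g b)) ↔ ({a, b} ∩ A : Set V).ncard ≠ 1)

/-- The restriction of a map `g` to a set `S` is a switch with respect to `A`:
the condition of `IsSwitch` holds for all cross-edges inside `S`. -/
def IsSwitchOn (g : V → V) (S : Set V) (A : Set V) : Prop :=
  ∀ a ∈ S ∩ Γ.left, ∀ b ∈ S ∩ Γ.right,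
    ((Γ.adj a b ↔ Γ.adj (g a) (g b)) ↔ ({a, b} ∩ A : Set V).ncard ≠ 1)

/-- The restriction of a map `g` to a set `S` is an isomorphism: `g` preserves
the cross-type of every cross-edge inside `S`. -/
def IsIsoOn (g : V → V) (S : Set V) : Prop :=
  ∀ a ∈ S ∩ Γ.left, ∀ b ∈ S ∩ Γ.right, (Γ.adj a b ↔ Γ.adj (g a) (g b))

end BipartiteGraph

/-- A subgroup of the full symmetric group is closed (in the topology of
pointwise convergence) iff it contains every permutation which agrees with some
member of the subgroup on each finite subset. -/
def IsClosedSubgroup {V : Type*} (G : Subgroup (Equiv.Perm V)) : Prop :=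
  ∀ g : Equiv.Perm V, (∀ F : Finset V, ∃ h ∈ G, ∀ x ∈ F, h x = g x) → g ∈ G

/-- The closed subgroup generated by a set of permutations: the intersection of
all closed subgroups containing the set. -/
def closedClosure {V : Type*} (S : Set (Equiv.Perm V)) : Subgroup (Equiv.Perm V) :=
  sInf {G : Subgroup (Equiv.Perm V) | IsClosedSubgroup G ∧ S ⊆ ↑G}

namespace BipartiteGraph

variable {V : Type*} (Γ : BipartiteGraph V)

/-- The switch group `S_X(Γ)`: the closed subgroup of `Sym_{l,r}(Γ)` generated
by `Aut(Γ)` together with all switches with respect to a single vertex `v ∈ R_i`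
for `i ∈ X`. -/
def switchGroup (X : Set BSide) : Subgroup (Equiv.Perm V) :=
  closedClosure ((Γ.autGroup : Set (Equiv.Perm V)) ∪
    {g | ∃ i ∈ X, ∃ v ∈ Γ.side i, Γ.IsSwitch g {v}})

/-- The group `S_X(Γ)* `: the closed subgroup generated by `S_X(Γ)` together with
a switch `ρ` with respect to the whole side `R_l`. -/
def switchGroupStar (X : Set BSide) : Subgroup (Equiv.Perm V) :=
  closedClosure ((Γ.switchGroup X : Set (Equiv.Perm V)) ∪ {g | Γ.IsSwitch g Γ.left})

/-- Membership in `Aut(Γ)*`, the group of side-preserving permutations which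
either preserve all cross-types on `R_l × R_r` or exchange all cross-types on
`R_l × R_r`. -/
def InAutStar (g : Equiv.Perm V) : Prop :=
  g ∈ Γ.symLR ∧
    ((∀ a ∈ Γ.left, ∀ b ∈ Γ.right, (Γ.adj a b ↔ Γ.adj (g a) (g b))) ∨
     (∀ a ∈ Γ.left, ∀ b ∈ Γ.right, (Γ.adj a b ↔ ¬ Γ.adj (g a) (g b))))

/-- The number of cross-edges of cross-type `P₁` inside the set `S`. -/
noncomputable def edgeCount (S : Set V) : ℕ :=
  {p : V × V | p.1 ∈ S ∧ p.2 ∈ S ∧ Γ.adj p.1 p.2}.ncard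

/-- `g` preserves the parity of cross-types on `S`: the number of `P₁`
cross-edges in `S` is even iff the number of `P₁` cross-edges in `g[S]` is even. -/
def PreservesParityOn (g : V → V) (S : Set V) : Prop :=
  Even (Γ.edgeCount S) ↔ Even (Γ.edgeCount (g '' S))

/-- An `(m × n)`-subgraph of `Γ`: a finite set of vertices with `m` vertices on
the left side and `n` vertices on the right side. -/
def IsMNSubgraph (S : Set V) (m n : ℕ) : Prop :=
  S.Finite ∧ (S ∩ Γ.left).ncard = m ∧ (S ∩ Γ.right).ncard = n

end BipartiteGraph

namespace BipartiteGraph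

/-- The composite `f_j ∘ f_{j-1} ∘ ... ∘ f_0` of an indexed family of
permutations. -/
def compSeq {V : Type*} (c : ℕ → Equiv.Perm V) : ℕ → V → V
  | 0 => fun x => c 0 x
  | j + 1 => fun x => c (j + 1) (compSeq c j x)

/-- An `(m × n)`-analysis of the restriction to the finite set `Z` of a member
`g` of `S_{l,r}(Γ)`: a finite sequence `f_0, ..., f_s` of members of
`F(S_{l,r}(Γ))` (each represented by a full group element `c j`, restricted to
the relevant set) such that
(1) `f_0 = θ ∘ (g ↾ Z)` for some `θ ∈ F(Aut(Γ)*)`;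
(2) for each `0 ≤ j ≤ s-1` there exist an `(m × n)`-subgraph `Y_j ⊆ Z` and
`θ_j ∈ S_{l,r}(Γ)` such that (a) `θ_j` is either an automorphism or a switch
with respect to some vertex `v_j ∈ Y_j`, (b) `θ_j ↾ Y_j = (f_j ∘ ... ∘ f_0) ↾ Y_j`,
and (c) `f_{j+1} = θ_j⁻¹ ↾ ran(f_j ∘ ... ∘ f_0)`;
(3) `f_s ∘ ... ∘ f_0 : Z → Γ` is an isomorphic embedding. -/
def HasMNAnalysis {V : Type*} (Γ : BipartiteGraph V) (g : Equiv.Perm V)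
    (Z : Finset V) (m n : ℕ) : Prop :=
  ∃ (s : ℕ) (c : ℕ → Equiv.Perm V),
    (∀ j ≤ s, c j ∈ Γ.switchGroup {BSide.l, BSide.r}) ∧
    (∃ θ : Equiv.Perm V, Γ.InAutStar θ ∧ ∀ x ∈ Z, c 0 x = θ (g x)) ∧
    (∀ j < s, ∃ Y : Finset V, Y ⊆ Z ∧
      ((Y : Set V) ∩ Γ.left).ncard = m ∧ ((Y : Set V) ∩ Γ.right).ncard = n ∧
      ∃ θj ∈ Γ.switchGroup {BSide.l, BSide.r},
        (θj ∈ Γ.autGroup ∨ ∃ v ∈ Y, Γ.IsSwitch θj {v}) ∧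
        (∀ x ∈ Y, θj x = compSeq c j x) ∧
        (∀ x ∈ Z, c (j + 1) (compSeq c j x) = θj⁻¹ (compSeq c j x))) ∧
    ((∀ x ∈ Z, (x ∈ Γ.left ↔ compSeq c s x ∈ Γ.left) ∧
        (x ∈ Γ.right ↔ compSeq c s x ∈ Γ.right)) ∧
      ∀ a ∈ (Z : Set V) ∩ Γ.left, ∀ b ∈ (Z : Set V) ∩ Γ.right,
        (Γ.adj a b ↔ Γ.adj (compSeq c s a) (compSeq c s b)))

end BipartiteGraph

/-!
Members of `S_{l,r}(Γ)` act locally as switches: on each finite set `Z`, `g ∈ S_{l,r}(Γ)`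
changes cross-types exactly as a switch with respect to some `A ⊆ Z` does, because this property
holds for the generators and survives products, inverses and pointwise limits. Complementing `A`
on one side of `Z` only exchanges all cross-types, which is absorbed by a member `θ` of
`Aut(Γ)*`; so `A` may be taken to meet at most half of each side of `Z`. A product `ψ` of
single-vertex switches is a global switch with respect to `A`, and `θ ∘ g = ψ` on `Z`. The
vertices of `A` are then peeled off one by one: for `v ∈ A` some `(m × n)`-subgraph `Y ⊆ Z` meets
`A` only in `v`, and a single-vertex switch agreeing with the current map on `Y` is composed away.

All permutations needed are produced by back and forth: switching the random bipartite graph with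
respect to a finite set, or a whole side, yields a random bipartite graph again.
-/

open scoped symmDiff

theorem Set.ncard_pair_inter_ne_one_iff {V : Type*} {a b : V} (hab : a ≠ b) (A : Set V) :
    (({a, b} : Set V) ∩ A).ncard ≠ 1 ↔ (a ∈ A ↔ b ∈ A) := by
  by_cases ha : a ∈ A <;> by_cases hb : b ∈ A <;>
    simp [Set.insert_inter_of_mem, Set.insert_inter_of_notMem, ha, hb, Set.ncard_pair hab]

theorem Set.ncard_insert_sdiff_singleton_inter {V : Type*} {Y s : Set V} {v w : V} (hv : v ∉ Y)
    (hw : w ∈ Y) (hvw : v ∈ s ↔ w ∈ s) : (insert v (Y \ {w}) ∩ s).ncard = (Y ∩ s).ncard := by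
  by_cases hvs : v ∈ s
  · rw [Set.insert_inter_of_mem hvs, ← Set.inter_sdiff_right_comm,
      Set.ncard_exchange (s := Y ∩ s) (fun h => hv h.1) ⟨hw, hvw.1 hvs⟩]
  · rw [Set.insert_inter_of_notMem hvs, ← Set.inter_sdiff_right_comm,
      Set.sdiff_singleton_eq_self fun h => hvs (hvw.2 h.2)]

open Classical in
theorem Finset.exists_le_two_mul_card_filter_not_iff {V : Type*} (X : Finset V) (p : V → Prop) :
    ∃ c : Prop, X.card ≤ 2 * (X.filter fun x => ¬ (p x ↔ c)).card := by
  have h := X.card_filter_add_card_filter_not p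
  by_cases hX : X.card ≤ 2 * (X.filter p).card
  · exact ⟨False, by simpa using hX⟩
  · exact ⟨True, by simp only [iff_true]; omega⟩

def switchRel {V : Type*} (A : Set V) (P : V → V → Prop) (a b : V) : Prop :=
  P a b ↔ (a ∈ A ↔ b ∈ A)

theorem flip_switchRel {V : Type*} (A : Set V) (P : V → V → Prop) :
    flip (switchRel A P) = switchRel A (flip P) := by
  ext a b
  simp only [flip, switchRel, iff_comm (a := b ∈ A)]

theorem switchRel_switchRel {V : Type*} (A C : Set V) (P : V → V → Prop) (a b : V) :
    switchRel C (switchRel A P) a b ↔ switchRel (A ∆ C) P a b := by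
  simp only [switchRel, Set.mem_symmDiff]
  tauto

section BackAndForth

variable {V : Type*} {L : Set V} {P Q : V → V → Prop}

def RealizesAllPatterns (L : Set V) (P : V → V → Prop) : Prop :=
  ∀ (S X : Finset V) (t : V → Prop), ↑X ⊆ Lᶜ → ∃ v ∈ L, v ∉ S ∧ ∀ x ∈ X, (P v x ↔ t x)

def HasExtensionProperty (L : Set V) (P : V → V → Prop) : Prop :=
  RealizesAllPatterns L P ∧ RealizesAllPatterns Lᶜ (flip P)

theorem realizesAllPatterns_of_exists (hinf : Lᶜ.Infinite)
    (h : ∀ X₁ X₂ : Finset V, ↑X₁ ⊆ Lᶜ → ↑X₂ ⊆ Lᶜ → Disjoint X₁ X₂ →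
      ∃ v ∈ L, (∀ x ∈ X₁, P v x) ∧ ∀ x ∈ X₂, ¬ P v x) :
    RealizesAllPatterns L P := by
  classical
  intro S
  induction S using Finset.induction_on with
  | empty =>
    intro X t hX
    obtain ⟨v, hv, h₁, h₂⟩ := h (X.filter t) (X.filter (¬ t ·))
      ((Finset.coe_subset.2 (Finset.filter_subset _ _)).trans hX)
      ((Finset.coe_subset.2 (Finset.filter_subset _ _)).trans hX)
      (Finset.disjoint_filter_filter_not _ _ _)
    refine ⟨v, hv, Finset.notMem_empty v, fun x hx => ?_⟩
    by_cases htx : t x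
    · exact iff_of_true (h₁ x (Finset.mem_filter.2 ⟨hx, htx⟩)) htx
    · exact iff_of_false (h₂ x (Finset.mem_filter.2 ⟨hx, htx⟩)) htx
  | insert s S _ ih =>
    intro X t hX
    -- a fresh vertex `x₀` on which `v` is required to differ from `s`
    obtain ⟨x₀, hx₀, hx₀X⟩ := (hinf.sdiff X.finite_toSet).nonempty
    obtain ⟨v, hv, hvS, hvX⟩ := ih (insert x₀ X) (fun x => if x = x₀ then ¬ P s x₀ else t x)
      (by rw [Finset.coe_insert]; exact Set.insert_subset hx₀ hX)
    refine ⟨v, hv, ?_, fun x hx => ?_⟩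
    · rw [Finset.mem_insert, not_or]
      refine ⟨?_, hvS⟩
      rintro rfl
      simpa using hvX x₀ (Finset.mem_insert_self _ _)
    · simpa [ne_of_mem_of_not_mem hx hx₀X] using hvX x (Finset.mem_insert_of_mem hx)

theorem RealizesAllPatterns.switchRel {A : Set V} (hP : RealizesAllPatterns L P)
    (F : Finset V) (c : Prop) (hA : ∀ v ∈ L, v ∉ F → (v ∈ A ↔ c)) :
    RealizesAllPatterns L (switchRel A P) := by
  classical
  intro S X t hX
  obtain ⟨v, hv, hvS, hvX⟩ := hP (S ∪ F) X (fun x => t x ↔ (c ↔ x ∈ A)) hX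
  rw [Finset.mem_union, not_or] at hvS
  refine ⟨v, hv, hvS.1, fun x hx => ?_⟩
  rw [_root_.switchRel, hvX x hx, hA v hv hvS.2]
  tauto

theorem HasExtensionProperty.switchRel {A : Set V} (hP : HasExtensionProperty L P)
    (F : Finset V) (c c' : Prop) (hL : ∀ v ∈ L, v ∉ F → (v ∈ A ↔ c))
    (hLc : ∀ v ∉ L, v ∉ F → (v ∈ A ↔ c')) :
    HasExtensionProperty L (switchRel A P) :=
  ⟨hP.1.switchRel F c hL, flip_switchRel A P ▸ hP.2.switchRel F c' hLc⟩

def PairCompatible (L : Set V) (P Q : V → V → Prop) (p q : V × V) : Prop :=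
  (p.1 = q.1 ↔ p.2 = q.2) ∧ (p.1 ∈ L ↔ p.2 ∈ L) ∧ (p.1 ∈ L → q.1 ∉ L → (Q p.1 q.1 ↔ P p.2 q.2))

/-- A finite partial isomorphism from `(L, Q)` to `(L, P)`, given by its graph; the sides are `L`
and `Lᶜ`, and the relations only matter on `L × Lᶜ`. -/
def IsPartialIso (L : Set V) (P Q : V → V → Prop) (f : Finset (V × V)) : Prop :=
  ∀ p ∈ f, ∀ q ∈ f, PairCompatible L P Q p q

namespace IsPartialIso

variable {f : Finset (V × V)}

theorem compl (hf : IsPartialIso L P Q f) : IsPartialIso Lᶜ (flip P) (flip Q) f :=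
  fun p hp q hq => ⟨(hf p hp q hq).1, not_congr (hf p hp q hq).2.1,
    fun hpL hqL => (hf q hq p hp).2.2 (not_not.1 hqL) hpL⟩

theorem of_compl (hf : IsPartialIso Lᶜ (flip P) (flip Q) f) : IsPartialIso L P Q f := by
  have h := hf.compl
  rwa [compl_compl] at h

section DecidableEq

variable [DecidableEq V]

theorem swap (hf : IsPartialIso L P Q f) : IsPartialIso L Q P (f.image Prod.swap) := by
  simp only [IsPartialIso, Finset.mem_image]
  rintro _ ⟨p, hp, rfl⟩ _ ⟨q, hq, rfl⟩
  obtain ⟨hpq, hp, hQP⟩ := hf p hp q hq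
  refine ⟨hpq.symm, hp.symm, fun hpL hqL => (hQP (hp.2 hpL) ?_).symm⟩
  exact fun h => hqL ((hf q hq q hq).2.1.1 h)

theorem insert_pair {x y : V} (hf : IsPartialIso L P Q f)
    (hxy : PairCompatible L P Q (x, y) (x, y))
    (hcompat : ∀ q ∈ f, PairCompatible L P Q (x, y) q ∧ PairCompatible L P Q q (x, y)) :
    IsPartialIso L P Q (insert (x, y) f) := by
  simp only [IsPartialIso, Finset.mem_insert]
  rintro p (rfl | hp) q (rfl | hq)
  exacts [hxy, (hcompat q hq).1, (hcompat p hp).2, hf p hp q hq]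

theorem exists_insert_of_mem (hP : RealizesAllPatterns L P) (hf : IsPartialIso L P Q f)
    {x : V} (hx : x ∈ L) : ∃ y, IsPartialIso L P Q (insert (x, y) f) := by
  classical
  by_cases hdom : ∃ y, (x, y) ∈ f
  · obtain ⟨y, hy⟩ := hdom
    exact ⟨y, by rwa [Finset.insert_eq_of_mem hy]⟩
  push Not at hdom
  -- realise on the images of the `Lᶜ`-points of `f` the `Q`-pattern of `x` on their preimages
  obtain ⟨y, hy, hyS, hyX⟩ := hP (f.image Prod.snd) ((f.filter (·.1 ∉ L)).image Prod.snd)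
    (fun y' => ∃ b, (b, y') ∈ f ∧ Q x b) (by
      intro y' hy'
      simp only [Finset.coe_image, Finset.coe_filter, Set.mem_image, Set.mem_ofPred_eq] at hy'
      obtain ⟨q, ⟨hq, hqL⟩, rfl⟩ := hy'
      exact fun h => hqL ((hf q hq q hq).2.1.2 h))
  have hfresh : ∀ q ∈ f, x ≠ q.1 ∧ y ≠ q.2 := fun q hq =>
    ⟨fun h => hdom q.2 (h ▸ hq), fun h => hyS (Finset.mem_image.2 ⟨q, hq, h.symm⟩)⟩
  refine ⟨y, hf.insert_pair ⟨iff_of_true rfl rfl, iff_of_true hx hy, fun h h' => absurd h h'⟩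
    fun q hq => ?_⟩
  obtain ⟨hxq, hyq⟩ := hfresh q hq
  refine ⟨⟨iff_of_false hxq hyq, iff_of_true hx hy, fun _ hqL => ?_⟩,
    ⟨iff_of_false (Ne.symm hxq) (Ne.symm hyq), (hf q hq q hq).2.1, fun _ h => absurd hx h⟩⟩
  rw [hyX q.2 (Finset.mem_image.2 ⟨q, Finset.mem_filter.2 ⟨hq, hqL⟩, rfl⟩)]
  refine ⟨fun h => ⟨q.1, hq, h⟩, fun ⟨b, hb, hxb⟩ => ?_⟩
  have hbq : b = q.1 := (hf (b, q.2) hb q hq).1.2 rfl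
  rwa [hbq] at hxb

theorem exists_insert (hP : HasExtensionProperty L P) (hf : IsPartialIso L P Q f) (x : V) :
    ∃ y, IsPartialIso L P Q (insert (x, y) f) := by
  by_cases hx : x ∈ L
  · exact hf.exists_insert_of_mem hP.1 hx
  · obtain ⟨y, hy⟩ := hf.compl.exists_insert_of_mem hP.2 hx
    exact ⟨y, hy.of_compl⟩

theorem exists_insert_snd (hQ : HasExtensionProperty L Q) (hf : IsPartialIso L P Q f) (y : V) :
    ∃ x, IsPartialIso L P Q (insert (x, y) f) := by
  obtain ⟨x, hx⟩ := hf.swap.exists_insert hQ y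
  refine ⟨x, ?_⟩
  simpa [Finset.image_insert, Finset.image_image] using hx.swap

end DecidableEq

/-- The back-and-forth argument: by the Rasiowa–Sikorski lemma, a generic ideal of finite
partial isomorphisms is defined at every point in both directions, so its union is the graph of
a permutation. -/
theorem exists_perm [Countable V] (hP : HasExtensionProperty L P)
    (hQ : HasExtensionProperty L Q) {f : Finset (V × V)} (hf : IsPartialIso L P Q f) :
    ∃ σ : Equiv.Perm V, (∀ p ∈ f, σ p.1 = p.2) ∧
      ∀ a b, PairCompatible L P Q (a, σ a) (b, σ b) := by
  classical
  have := Encodable.ofCountable V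
  let cofinal : V ⊕ V → Order.Cofinal {g // IsPartialIso L P Q g}
    | .inl x => ⟨{g | ∃ y, (x, y) ∈ g.1}, fun g =>
        let ⟨y, hy⟩ := g.2.exists_insert hP x
        ⟨⟨_, hy⟩, ⟨y, Finset.mem_insert_self _ _⟩, Finset.subset_insert _ _⟩⟩
    | .inr y => ⟨{g | ∃ x, (x, y) ∈ g.1}, fun g =>
        let ⟨x, hx⟩ := g.2.exists_insert_snd hQ y
        ⟨⟨_, hx⟩, ⟨x, Finset.mem_insert_self _ _⟩, Finset.subset_insert _ _⟩⟩
  let I := Order.idealOfCofinals ⟨f, hf⟩ cofinal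
  let R : Set (V × V) := {p | ∃ g ∈ I, p ∈ g.1}
  have hR : ∀ p ∈ R, ∀ q ∈ R, PairCompatible L P Q p q := by
    rintro p ⟨g, hg, hp⟩ q ⟨g', hg', hq⟩
    obtain ⟨h, -, hgh, hg'h⟩ := I.directed g hg g' hg'
    exact h.2 p (hgh hp) q (hg'h hq)
  have hdom : ∀ x, ∃ y, (x, y) ∈ R := fun x =>
    let ⟨g, ⟨y, hy⟩, hg⟩ := Order.cofinal_meets_idealOfCofinals _ cofinal (.inl x)
    ⟨y, g, hg, hy⟩
  have hran : ∀ y, ∃ x, (x, y) ∈ R := fun y =>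
    let ⟨g, ⟨x, hx⟩, hg⟩ := Order.cofinal_meets_idealOfCofinals _ cofinal (.inr y)
    ⟨x, g, hg, hx⟩
  choose σ hσ using hdom
  have hinj : Function.Injective σ := fun a b h => (hR _ (hσ a) _ (hσ b)).1.2 h
  have hsurj : Function.Surjective σ := fun y =>
    let ⟨x, hx⟩ := hran y
    ⟨x, ((hR _ hx _ (hσ x)).1.1 rfl).symm⟩
  refine ⟨Equiv.ofBijective σ ⟨hinj, hsurj⟩, fun p hp => ?_, fun a b => hR _ (hσ a) _ (hσ b)⟩
  exact (hR _ (hσ p.1) p ⟨_, Order.mem_idealOfCofinals _ _, hp⟩).1.1 rfl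

end IsPartialIso

end BackAndForth

namespace BipartiteGraph

variable {V : Type*} {Γ : BipartiteGraph V}

theorem compl_left (Γ : BipartiteGraph V) : Γ.leftᶜ = Γ.right :=
  IsCompl.compl_eq ⟨Γ.disjoint_sides, codisjoint_iff.2 Γ.union_eq⟩

theorem mem_right_iff {x : V} : x ∈ Γ.right ↔ x ∉ Γ.left := by
  rw [← compl_left]
  rfl

theorem IsRandom.hasExtensionProperty (hΓ : Γ.IsRandom) : HasExtensionProperty Γ.left Γ.adj := by
  refine ⟨realizesAllPatterns_of_exists ?_ ?_, realizesAllPatterns_of_exists ?_ ?_⟩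
  · simpa only [compl_left] using hΓ.right_infinite
  · simpa only [compl_left] using hΓ.ext_right
  · simpa only [compl_compl] using hΓ.left_infinite
  · rw [compl_compl, compl_left]
    exact hΓ.ext_left

theorem isSwitchOn_iff {g : V → V} {S A : Set V} :
    Γ.IsSwitchOn g S A ↔
      ∀ a ∈ S ∩ Γ.left, ∀ b ∈ S ∩ Γ.right, (Γ.adj (g a) (g b) ↔ switchRel A Γ.adj a b) := by
  refine forall₂_congr fun a ha => forall₂_congr fun b hb => ?_
  have hab : a ≠ b := fun h => Set.disjoint_left.1 Γ.disjoint_sides ha.2 (h ▸ hb.2)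
  rw [Set.ncard_pair_inter_ne_one_iff hab, switchRel]
  tauto

theorem isSwitch_iff {g : Equiv.Perm V} {A : Set V} :
    Γ.IsSwitch g A ↔
      g ∈ Γ.symLR ∧ ∀ a ∈ Γ.left, ∀ b ∈ Γ.right, (Γ.adj (g a) (g b) ↔ switchRel A Γ.adj a b) := by
  have h := isSwitchOn_iff (Γ := Γ) (g := g) (S := Set.univ) (A := A)
  simp only [IsSwitchOn, Set.univ_inter] at h
  rw [IsSwitch, h]

theorem IsSwitch.isSwitchOn {g : Equiv.Perm V} {A : Set V} (h : Γ.IsSwitch g A) (S : Set V) :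
    Γ.IsSwitchOn g S A :=
  isSwitchOn_iff.2 fun a ha b hb => (isSwitch_iff.1 h).2 a ha.2 b hb.2

namespace IsSwitchOn

variable {g h : V → V} {S A : Set V}

theorem mono {S' A' : Set V} (hg : Γ.IsSwitchOn g S A) (hS : S' ⊆ S)
    (hA : ∀ x ∈ S', (x ∈ A' ↔ x ∈ A)) : Γ.IsSwitchOn g S' A' := by
  rw [isSwitchOn_iff] at hg ⊢
  intro a ha b hb
  rw [hg a ⟨hS ha.1, ha.2⟩ b ⟨hS hb.1, hb.2⟩, switchRel, switchRel, hA a ha.1, hA b hb.1]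

theorem congr (hg : Γ.IsSwitchOn g S A) (hgh : ∀ x ∈ S, g x = h x) : Γ.IsSwitchOn h S A := by
  rw [isSwitchOn_iff] at hg ⊢
  intro a ha b hb
  rw [← hgh a ha.1, ← hgh b hb.1]
  exact hg a ha b hb

theorem comp {C : Set V} (hg : Γ.IsSwitchOn g (h '' S) A)
    (hside : ∀ x, h x ∈ Γ.left ↔ x ∈ Γ.left) (hside' : ∀ x, h x ∈ Γ.right ↔ x ∈ Γ.right)
    (hh : Γ.IsSwitchOn h S C) : Γ.IsSwitchOn (g ∘ h) S (C ∆ (h ⁻¹' A)) := by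
  rw [isSwitchOn_iff] at hg hh ⊢
  intro a ha b hb
  rw [Function.comp_apply, Function.comp_apply, ← switchRel_switchRel,
    hg (h a) ⟨Set.mem_image_of_mem h ha.1, (hside a).2 ha.2⟩
      (h b) ⟨Set.mem_image_of_mem h hb.1, (hside' b).2 hb.2⟩,
    switchRel, hh a ha b hb]
  rfl

end IsSwitchOn

theorem IsSwitchOn.inv {g : Equiv.Perm V} {S A : Set V} (hg : g ∈ Γ.symLR)
    (h : Γ.IsSwitchOn g (⇑(g⁻¹) '' S) A) : Γ.IsSwitchOn ⇑(g⁻¹) S (⇑(g⁻¹) ⁻¹' A) := by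
  rw [isSwitchOn_iff] at h ⊢
  intro a ha b hb
  have hg' := inv_mem hg
  have key := h (g⁻¹ a) ⟨Set.mem_image_of_mem _ ha.1, (hg'.1 a).2 ha.2⟩
    (g⁻¹ b) ⟨Set.mem_image_of_mem _ hb.1, (hg'.2 b).2 hb.2⟩
  simp only [Equiv.Perm.coe_inv, Equiv.apply_symm_apply, switchRel] at key
  simp only [Equiv.Perm.coe_inv, switchRel, Set.mem_preimage]
  tauto

theorem IsSwitch.mul {g h : Equiv.Perm V} {A C : Set V} (hg : Γ.IsSwitch g A)
    (hh : Γ.IsSwitch h C) : Γ.IsSwitch (g * h) (C ∆ (⇑h ⁻¹' A)) := by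
  have hsym := hh.1
  have := (hg.isSwitchOn (h '' Set.univ)).comp hsym.1 hsym.2 (hh.isSwitchOn Set.univ)
  refine isSwitch_iff.2 ⟨mul_mem hg.1 hsym, fun a ha b hb => ?_⟩
  exact isSwitchOn_iff.1 this a ⟨trivial, ha⟩ b ⟨trivial, hb⟩

variable (Γ) in
def localSwitchGroup : Subgroup (Equiv.Perm V) where
  carrier := {g | g ∈ Γ.symLR ∧ ∀ Z : Finset V, ∃ A : Set V, Γ.IsSwitchOn g Z A}
  one_mem' := ⟨one_mem _, fun _ => ⟨∅, isSwitchOn_iff.2 fun a _ b _ => by simp [switchRel]⟩⟩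
  mul_mem' := by
    rintro g h ⟨hg, hgZ⟩ ⟨hh, hhZ⟩
    refine ⟨mul_mem hg hh, fun Z => ?_⟩
    classical
    obtain ⟨C, hC⟩ := hhZ Z
    obtain ⟨A, hA⟩ := hgZ (Z.image h)
    rw [Finset.coe_image] at hA
    exact ⟨_, hA.comp hh.1 hh.2 hC⟩
  inv_mem' := by
    rintro g ⟨hg, hgZ⟩
    refine ⟨inv_mem hg, fun Z => ?_⟩
    classical
    obtain ⟨A, hA⟩ := hgZ (Z.image ⇑(g⁻¹))
    rw [Finset.coe_image] at hA
    exact ⟨_, hA.inv hg⟩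

theorem isClosedSubgroup_localSwitchGroup : IsClosedSubgroup Γ.localSwitchGroup := by
  intro g hg
  have hside : ∀ v, (g v ∈ Γ.left ↔ v ∈ Γ.left) ∧ (g v ∈ Γ.right ↔ v ∈ Γ.right) := fun v => by
    obtain ⟨h, hh, hhg⟩ := hg {v}
    rw [← hhg v (Finset.mem_singleton_self v)]
    exact ⟨hh.1.1 v, hh.1.2 v⟩
  refine ⟨⟨fun v => (hside v).1, fun v => (hside v).2⟩, fun Z => ?_⟩
  obtain ⟨h, hh, hhg⟩ := hg Z
  obtain ⟨A, hA⟩ := hh.2 Z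
  exact ⟨A, hA.congr hhg⟩

theorem switchGroup_le_localSwitchGroup (X : Set BSide) :
    Γ.switchGroup X ≤ Γ.localSwitchGroup := by
  refine sInf_le ⟨isClosedSubgroup_localSwitchGroup, ?_⟩
  rintro g (⟨hg, hadj⟩ | ⟨-, -, v, -, hsw⟩)
  · refine ⟨hg, fun Z => ⟨∅, isSwitchOn_iff.2 fun a _ b _ => ?_⟩⟩
    simp [switchRel, hadj a b]
  · exact ⟨hsw.1, fun Z => ⟨{v}, hsw.isSwitchOn Z⟩⟩

theorem mem_symLR_of_mem_switchGroup {X : Set BSide} {g : Equiv.Perm V}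
    (hg : g ∈ Γ.switchGroup X) : g ∈ Γ.symLR :=
  (switchGroup_le_localSwitchGroup X hg).1

theorem mem_switchGroup_of_isSwitch_singleton {g : Equiv.Perm V} {v : V}
    (hg : Γ.IsSwitch g {v}) : g ∈ Γ.switchGroup {BSide.l, BSide.r} := by
  refine Subgroup.mem_sInf.2 fun G hG => hG.2 (Set.mem_union_right _ ?_)
  by_cases hv : v ∈ Γ.left
  · exact ⟨BSide.l, by simp, v, hv, hg⟩
  · exact ⟨BSide.r, by simp, v, mem_right_iff.2 hv, hg⟩

theorem IsRandom.exists_isSwitch_extending (hΓ : Γ.IsRandom) {A : Set V} (F : Finset V)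
    (c c' : Prop) (hl : ∀ v ∈ Γ.left, v ∉ F → (v ∈ A ↔ c))
    (hr : ∀ v ∈ Γ.right, v ∉ F → (v ∈ A ↔ c')) {f : Finset (V × V)}
    (hf : IsPartialIso Γ.left Γ.adj (switchRel A Γ.adj) f) :
    ∃ σ : Equiv.Perm V, (∀ p ∈ f, σ p.1 = p.2) ∧ Γ.IsSwitch σ A := by
  have := hΓ.countable
  have hA := hΓ.hasExtensionProperty.switchRel F c c' hl fun v hv => hr v (mem_right_iff.2 hv)
  obtain ⟨σ, hσf, hσ⟩ := hf.exists_perm hΓ.hasExtensionProperty hA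
  have hleft : ∀ v, σ v ∈ Γ.left ↔ v ∈ Γ.left := fun v => (hσ v v).2.1.symm
  refine ⟨σ, hσf, isSwitch_iff.2 ⟨⟨hleft, fun v => ?_⟩, fun a ha b hb => ?_⟩⟩
  · rw [mem_right_iff, mem_right_iff, hleft]
  · exact ((hσ a b).2.2 ha (mem_right_iff.1 hb)).symm

theorem isPartialIso_image [DecidableEq V] {g h : Equiv.Perm V} (hg : g ∈ Γ.symLR)
    (hh : h ∈ Γ.symLR) {A : Set V} {Z : Finset V}
    (hgh : ∀ a ∈ (Z : Set V) ∩ Γ.left, ∀ b ∈ (Z : Set V) ∩ Γ.right,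
      (Γ.adj (h a) (h b) ↔ switchRel A Γ.adj (g a) (g b))) :
    IsPartialIso Γ.left Γ.adj (switchRel A Γ.adj) (Z.image fun x => (g x, h x)) := by
  simp only [IsPartialIso, Finset.mem_image]
  rintro _ ⟨a, ha, rfl⟩ _ ⟨b, hb, rfl⟩
  refine ⟨g.injective.eq_iff.trans h.injective.eq_iff.symm, (hg.1 a).trans (hh.1 a).symm,
    fun hal hbl => (hgh a ⟨ha, (hg.1 a).1 hal⟩ b ⟨hb, ?_⟩).symm⟩
  rw [mem_right_iff, ← hg.1 b]
  exact hbl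

theorem IsRandom.exists_isSwitch_singleton (hΓ : Γ.IsRandom) (w : V) :
    ∃ τ : Equiv.Perm V, Γ.IsSwitch τ {w} := by
  classical
  obtain ⟨τ, -, hτ⟩ := hΓ.exists_isSwitch_extending (A := {w}) {w} False False
    (fun v _ hv => by simpa using hv) (fun v _ hv => by simpa using hv)
    (f := ∅) (fun p hp => absurd hp (Finset.notMem_empty p))
  exact ⟨τ, hτ⟩

/-- A switch with respect to a finite set is a product of switches with respect to single
vertices. -/
theorem IsRandom.exists_mem_switchGroup_isSwitch (hΓ : Γ.IsRandom) (B : Finset V) :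
    ∃ ψ ∈ Γ.switchGroup {BSide.l, BSide.r}, Γ.IsSwitch ψ B := by
  classical
  induction B using Finset.induction_on with
  | empty =>
    refine ⟨1, one_mem _, isSwitch_iff.2 ⟨one_mem _, fun a _ b _ => ?_⟩⟩
    simp [switchRel]
  | insert v B hvB ih =>
    obtain ⟨ψ, hψ, hψB⟩ := ih
    obtain ⟨τ, hτ⟩ := hΓ.exists_isSwitch_singleton (ψ v)
    refine ⟨τ * ψ, mul_mem (mem_switchGroup_of_isSwitch_singleton hτ) hψ, ?_⟩
    convert hτ.mul hψB using 1
    ext x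
    by_cases hx : x = v
    · simp [hx, hvB, Set.mem_symmDiff]
    · simp [hx, Set.mem_symmDiff]

/-- `ε` records whether `ψ ∘ g⁻¹` preserves or exchanges all cross-types on `g(Z)`. -/
theorem IsRandom.exists_inAutStar_comp_eq (hΓ : Γ.IsRandom) {g ψ : Equiv.Perm V}
    (hg : g ∈ Γ.symLR) (hψ : ψ ∈ Γ.symLR) {Z : Finset V} (ε : Prop)
    (hgψ : ∀ a ∈ (Z : Set V) ∩ Γ.left, ∀ b ∈ (Z : Set V) ∩ Γ.right,
      (Γ.adj (ψ a) (ψ b) ↔ (Γ.adj (g a) (g b) ↔ ε))) :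
    ∃ θ : Equiv.Perm V, Γ.InAutStar θ ∧ ∀ x ∈ Z, ψ x = θ (g x) := by
  classical
  -- `C` is `∅` if `ε` and the left side otherwise; switching with respect to a side exchanges
  -- all cross-types
  let C : Set V := {x | x ∈ Γ.left ∧ ¬ ε}
  have hCl : ∀ v ∈ Γ.left, v ∈ C ↔ ¬ ε := fun v hv => and_iff_right hv
  have hCr : ∀ v ∈ Γ.right, v ∈ C ↔ False := fun v hv =>
    iff_false_intro fun h => mem_right_iff.1 hv h.1
  have hC : ∀ a ∈ Γ.left, ∀ b ∈ Γ.right, (switchRel C Γ.adj a b ↔ (Γ.adj a b ↔ ε)) :=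
    fun a ha b hb => by rw [switchRel, hCl a ha, hCr b hb]; tauto
  obtain ⟨θ, hθg, hθ⟩ := hΓ.exists_isSwitch_extending ∅ (¬ ε) False
    (fun v hv _ => hCl v hv) (fun v hv _ => hCr v hv)
    (isPartialIso_image hg hψ fun a ha b hb => by
      rw [hgψ a ha b hb, hC _ ((hg.1 a).2 ha.2) _ ((hg.2 b).2 hb.2)])
  obtain ⟨hθ, hθC⟩ := isSwitch_iff.1 hθ
  refine ⟨θ, ⟨hθ, ?_⟩, fun x hx => (hθg _ (Finset.mem_image_of_mem _ hx)).symm⟩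
  by_cases hε : ε
  · exact Or.inl fun a ha b hb => by rw [hθC a ha b hb, hC a ha b hb]; tauto
  · exact Or.inr fun a ha b hb => by rw [hθC a ha b hb, hC a ha b hb]; tauto

variable (Γ) in
/-- Clauses (2) and (3) of an `(m × n)`-analysis whose first map `f₀` is `ψ ↾ Z`. -/
def HasAnalysisFrom (ψ : Equiv.Perm V) (Z : Finset V) (m n : ℕ) : Prop :=
  ∃ (s : ℕ) (c : ℕ → Equiv.Perm V), c 0 = ψ ∧
    (∀ j ≤ s, c j ∈ Γ.switchGroup {BSide.l, BSide.r}) ∧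
    (∀ j < s, ∃ Y : Finset V, Y ⊆ Z ∧
      ((Y : Set V) ∩ Γ.left).ncard = m ∧ ((Y : Set V) ∩ Γ.right).ncard = n ∧
      ∃ θj ∈ Γ.switchGroup {BSide.l, BSide.r},
        (θj ∈ Γ.autGroup ∨ ∃ v ∈ Y, Γ.IsSwitch θj {v}) ∧
        (∀ x ∈ Y, θj x = compSeq c j x) ∧
        (∀ x ∈ Z, c (j + 1) (compSeq c j x) = θj⁻¹ (compSeq c j x))) ∧
    ((∀ x ∈ Z, (x ∈ Γ.left ↔ compSeq c s x ∈ Γ.left) ∧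
        (x ∈ Γ.right ↔ compSeq c s x ∈ Γ.right)) ∧
      ∀ a ∈ (Z : Set V) ∩ Γ.left, ∀ b ∈ (Z : Set V) ∩ Γ.right,
        (Γ.adj a b ↔ Γ.adj (compSeq c s a) (compSeq c s b)))

namespace HasAnalysisFrom

variable {ψ θ : Equiv.Perm V} {Z : Finset V} {m n : ℕ}

theorem hasMNAnalysis {g : Equiv.Perm V} (h : Γ.HasAnalysisFrom ψ Z m n) (hθ : Γ.InAutStar θ)
    (hψ : ∀ x ∈ Z, ψ x = θ (g x)) : Γ.HasMNAnalysis g Z m n := by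
  obtain ⟨s, c, rfl, hc, hsteps, hfinal⟩ := h
  exact ⟨s, c, hc, ⟨θ, hθ, hψ⟩, hsteps, hfinal⟩

theorem of_isSwitchOn_empty (hψ : ψ ∈ Γ.switchGroup {BSide.l, BSide.r})
    (h : Γ.IsSwitchOn ψ Z ∅) : Γ.HasAnalysisFrom ψ Z m n := by
  have hψ' := mem_symLR_of_mem_switchGroup hψ
  refine ⟨0, fun _ => ψ, rfl, fun _ _ => hψ, fun j hj => absurd hj j.not_lt_zero,
    fun x _ => ⟨(hψ'.1 x).symm, (hψ'.2 x).symm⟩, fun a ha b hb => ?_⟩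
  simp [compSeq, isSwitchOn_iff.1 h a ha b hb, switchRel]

theorem cons {v : V} {Y : Finset V} (hψ : ψ ∈ Γ.switchGroup {BSide.l, BSide.r})
    (hθ : θ ∈ Γ.switchGroup {BSide.l, BSide.r}) (hθv : Γ.IsSwitch θ {v}) (hYZ : Y ⊆ Z)
    (hY : Γ.IsMNSubgraph Y m n) (hvY : v ∈ Y) (hθψ : ∀ x ∈ Y, θ x = ψ x)
    (h : Γ.HasAnalysisFrom (θ⁻¹ * ψ) Z m n) : Γ.HasAnalysisFrom ψ Z m n := by
  obtain ⟨s, c, hc0, hc, hsteps, hsides, hiso⟩ := h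
  let c' : ℕ → Equiv.Perm V
    | 0 => ψ
    | 1 => θ⁻¹
    | j + 2 => c (j + 1)
  have hcomp : ∀ j x, compSeq c' (j + 1) x = compSeq c j x := by
    intro j
    induction j with
    | zero => intro x; simp [compSeq, c', hc0]
    | succ j ih => intro x; simp only [compSeq] at ih ⊢; rw [ih]
  refine ⟨s + 1, c', rfl, fun j hj => ?_, fun j hj => ?_, fun x hx => ?_, fun a ha b hb => ?_⟩
  · match j with
    | 0 => exact hψ
    | 1 => exact inv_mem hθ
    | j + 2 => exact hc (j + 1) (by omega)
  · match j with
    | 0 => exact ⟨Y, hYZ, hY.2.1, hY.2.2, θ, hθ, Or.inr ⟨v, hvY, hθv⟩, hθψ, fun _ _ => rfl⟩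
    | j + 1 =>
      obtain ⟨Y', hY'Z, hY'l, hY'r, θ', hθ', hθ'v, hθ'Y, hθ'Z⟩ := hsteps j (by omega)
      refine ⟨Y', hY'Z, hY'l, hY'r, θ', hθ', hθ'v, fun x hx => ?_, fun x hx => ?_⟩
      · rw [hcomp]; exact hθ'Y x hx
      · rw [hcomp]; exact hθ'Z x hx
  · rw [hcomp]; exact hsides x hx
  · rw [hcomp, hcomp]; exact hiso a ha b hb

end HasAnalysisFrom

theorem exists_isMNSubgraph_subset [DecidableEq V] {m n : ℕ} {Xl Xr : Finset V} (hl : ↑Xl ⊆ Γ.left)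
    (hr : ↑Xr ⊆ Γ.right) (hm : m ≤ Xl.card) (hn : n ≤ Xr.card) :
    ∃ Y ⊆ Xl ∪ Xr, Γ.IsMNSubgraph Y m n := by
  obtain ⟨Tl, hTl, rfl⟩ := Finset.exists_subset_card_eq hm
  obtain ⟨Tr, hTr, rfl⟩ := Finset.exists_subset_card_eq hn
  replace hl := (Finset.coe_subset.2 hTl).trans hl
  replace hr := (Finset.coe_subset.2 hTr).trans hr
  refine ⟨Tl ∪ Tr, Finset.union_subset_union hTl hTr, Finset.finite_toSet _, ?_, ?_⟩
  · rw [Finset.coe_union, Set.union_inter_distrib_right, Set.inter_eq_left.2 hl,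
      Set.disjoint_iff_inter_eq_empty.1 (Γ.disjoint_sides.symm.mono_left hr), Set.union_empty,
      Set.ncard_coe_finset]
  · rw [Finset.coe_union, Set.union_inter_distrib_right, Set.inter_eq_left.2 hr,
      Set.disjoint_iff_inter_eq_empty.1 (Γ.disjoint_sides.mono_left hl), Set.empty_union,
      Set.ncard_coe_finset]

/-- Trading a vertex of an `(m × n)`-subgraph for a vertex `v` on the same side. -/
theorem exists_isMNSubgraph_mem [DecidableEq V] {m n : ℕ} (hm : 0 < m) (hn : 0 < n)
    {Z B Y₀ : Finset V} (hY₀Z : Y₀ ⊆ Z \ B) (hY₀ : Γ.IsMNSubgraph Y₀ m n) {v : V} (hvZ : v ∈ Z)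
    (hvB : v ∈ B) :
    ∃ Y ⊆ Z, Γ.IsMNSubgraph Y m n ∧ v ∈ Y ∧ ∀ x ∈ Y, x ∈ B → x = v := by
  obtain ⟨w, hwY₀, hvw⟩ : ∃ w ∈ Y₀, (v ∈ Γ.left ↔ w ∈ Γ.left) := by
    by_cases hv : v ∈ Γ.left
    · obtain ⟨w, hw, hwl⟩ := Set.nonempty_of_ncard_ne_zero (hY₀.2.1.trans_ne hm.ne')
      exact ⟨w, hw, iff_of_true hv hwl⟩
    · obtain ⟨w, hw, hwr⟩ := Set.nonempty_of_ncard_ne_zero (hY₀.2.2.trans_ne hn.ne')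
      exact ⟨w, hw, iff_of_false hv (mem_right_iff.1 hwr)⟩
  have hvY₀ : v ∉ Y₀ := fun h => (Finset.mem_sdiff.1 (hY₀Z h)).2 hvB
  have hcard : ∀ s : Set V, (v ∈ s ↔ w ∈ s) →
      ((↑(insert v (Y₀.erase w)) : Set V) ∩ s).ncard = ((Y₀ : Set V) ∩ s).ncard := fun s hs => by
    rw [Finset.coe_insert, Finset.coe_erase]
    exact Set.ncard_insert_sdiff_singleton_inter hvY₀ hwY₀ hs
  refine ⟨insert v (Y₀.erase w),
    Finset.insert_subset hvZ ((Finset.erase_subset _ _).trans (hY₀Z.trans Finset.sdiff_subset)),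
    ⟨Finset.finite_toSet _, by rw [hcard _ hvw, hY₀.2.1],
      by rw [hcard _ (by rw [mem_right_iff, mem_right_iff, hvw]), hY₀.2.2]⟩,
    Finset.mem_insert_self _ _, fun x hx hxB => ?_⟩
  rcases Finset.mem_insert.1 hx with rfl | hx
  · rfl
  · exact absurd hxB (Finset.mem_sdiff.1 (hY₀Z (Finset.mem_of_mem_erase hx))).2

/-- Complementing the switching set on one side changes a switch only by a global exchange of
cross-types, so the switching set can be taken to meet at most half of each side. -/
theorem IsSwitchOn.exists_small_switchSet [DecidableEq V] {g : Equiv.Perm V} {Z : Finset V}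
    {A : Set V} (hA : Γ.IsSwitchOn g Z A) {m n : ℕ} (hm : 2 * m ≤ ((Z : Set V) ∩ Γ.left).ncard)
    (hn : 2 * n ≤ ((Z : Set V) ∩ Γ.right).ncard) :
    ∃ B ⊆ Z, (∃ Y₀ ⊆ Z \ B, Γ.IsMNSubgraph Y₀ m n) ∧ ∃ ε : Prop,
      ∀ a ∈ (Z : Set V) ∩ Γ.left, ∀ b ∈ (Z : Set V) ∩ Γ.right,
        (Γ.adj (g a) (g b) ↔ (switchRel B Γ.adj a b ↔ ε)) := by
  classical
  set Zl := Z.filter (· ∈ Γ.left)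
  set Zr := Z.filter (· ∈ Γ.right)
  obtain ⟨cl, hcl⟩ := Zl.exists_le_two_mul_card_filter_not_iff (· ∈ A)
  obtain ⟨cr, hcr⟩ := Zr.exists_le_two_mul_card_filter_not_iff (· ∈ A)
  have hZl : ((Z : Set V) ∩ Γ.left) = Zl := by ext; simp [Zl]
  have hZr : ((Z : Set V) ∩ Γ.right) = Zr := by ext; simp [Zr]
  rw [hZl, Set.ncard_coe_finset] at hm
  rw [hZr, Set.ncard_coe_finset] at hn
  set B := Zl.filter (fun x => x ∈ A ↔ cl) ∪ Zr.filter (fun x => x ∈ A ↔ cr)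
  have hBl : ∀ x ∈ (Z : Set V) ∩ Γ.left, (x ∈ B ↔ (x ∈ A ↔ cl)) := fun x hx => by
    have hxr : x ∉ Γ.right := fun h => mem_right_iff.1 h hx.2
    simp [B, Zl, Zr, Finset.mem_coe.1 hx.1, hx.2, hxr]
  have hBr : ∀ x ∈ (Z : Set V) ∩ Γ.right, (x ∈ B ↔ (x ∈ A ↔ cr)) := fun x hx => by
    have hxl : x ∉ Γ.left := mem_right_iff.1 hx.2
    simp [B, Zl, Zr, Finset.mem_coe.1 hx.1, hx.2, hxl]
  obtain ⟨Y₀, hY₀, hY₀mn⟩ := exists_isMNSubgraph_subset (Γ := Γ) (m := m) (n := n)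
    (Xl := Zl.filter fun x => ¬ (x ∈ A ↔ cl)) (Xr := Zr.filter fun x => ¬ (x ∈ A ↔ cr))
    (fun x hx => by simp_all [Zl]) (fun x hx => by simp_all [Zr]) (by omega) (by omega)
  refine ⟨B, Finset.union_subset ((Finset.filter_subset _ _).trans (Finset.filter_subset _ _))
    ((Finset.filter_subset _ _).trans (Finset.filter_subset _ _)),
    ⟨Y₀, hY₀.trans fun x hx => ?_, hY₀mn⟩, cl ↔ cr, fun a ha b hb => ?_⟩
  · simp only [Finset.mem_union, Finset.mem_filter, Zl, Zr] at hx
    rcases hx with ⟨⟨hxZ, hxl⟩, hxA⟩ | ⟨⟨hxZ, hxr⟩, hxA⟩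
    · exact Finset.mem_sdiff.2 ⟨hxZ, fun h => hxA ((hBl x ⟨hxZ, hxl⟩).1 h)⟩
    · exact Finset.mem_sdiff.2 ⟨hxZ, fun h => hxA ((hBr x ⟨hxZ, hxr⟩).1 h)⟩
  · rw [isSwitchOn_iff.1 hA a ha b hb, switchRel, switchRel, Finset.mem_coe, Finset.mem_coe,
      hBl a ha, hBr b hb]
    tauto

/-- Peeling: if `ψ` acts on `Z` as a switch with respect to `B ⊆ Z`, each vertex `v ∈ B` is
removed from the switching set by composing with the inverse of a single-vertex switch which
agrees with `ψ` on an `(m × n)`-subgraph meeting `B` only in `v`. -/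
theorem IsRandom.hasAnalysisFrom [DecidableEq V] (hΓ : Γ.IsRandom) {m n : ℕ} (hm : 0 < m)
    (hn : 0 < n) {Z B : Finset V} (hBZ : B ⊆ Z) (hY₀ : ∃ Y₀ ⊆ Z \ B, Γ.IsMNSubgraph Y₀ m n)
    {ψ : Equiv.Perm V} (hψ : ψ ∈ Γ.switchGroup {BSide.l, BSide.r})
    (hψB : Γ.IsSwitchOn ψ Z B) : Γ.HasAnalysisFrom ψ Z m n := by
  induction B using Finset.induction_on generalizing ψ with
  | empty => exact .of_isSwitchOn_empty hψ (by simpa using hψB)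
  | insert v B hvB ih =>
    obtain ⟨Y₀, hY₀Z, hY₀⟩ := hY₀
    obtain ⟨Y, hYZ, hY, hvY, hYB⟩ := exists_isMNSubgraph_mem hm hn hY₀Z hY₀
      (hBZ (Finset.mem_insert_self v B)) (Finset.mem_insert_self v B)
    have hψsym := mem_symLR_of_mem_switchGroup hψ
    have hψv : Γ.IsSwitchOn ψ Y {v} := hψB.mono hYZ fun x hx => by
      simp only [Set.mem_singleton_iff, Finset.coe_insert, Set.mem_insert_iff, Finset.mem_coe]
      exact ⟨Or.inl, fun h => hYB x hx (Finset.mem_insert.2 h)⟩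
    obtain ⟨θ, hθψ, hθ⟩ := hΓ.exists_isSwitch_extending (A := {v}) {v} False False
      (fun x _ hx => by simpa using hx) (fun x _ hx => by simpa using hx)
      (isPartialIso_image (one_mem _) hψsym (Z := Y) fun a ha b hb => by
        simpa using isSwitchOn_iff.1 hψv a ha b hb)
    have hθY : ∀ x ∈ Y, θ x = ψ x := fun x hx => by
      simpa using hθψ _ (Finset.mem_image_of_mem _ hx)
    have hθS := mem_switchGroup_of_isSwitch_singleton hθ
    refine .cons hψ hθS hθ hYZ hY hvY hθY (ih (hBZ.trans' (Finset.subset_insert v B))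
      ⟨Y₀, hY₀Z.trans (Finset.sdiff_subset_sdiff le_rfl (Finset.subset_insert v B)), hY₀⟩
      (mul_mem (inv_mem hθS) hψ) ?_)
    have hpeel := ((hθ.isSwitchOn _).inv hθ.1).comp hψsym.1 hψsym.2 hψB
    rw [← Equiv.Perm.coe_mul] at hpeel
    -- on `Z`, the switching set of `θ⁻¹ * ψ` is `insert v B ∆ {v} = B`
    refine hpeel.mono subset_rfl fun x _ => ?_
    have hx : θ.symm (ψ x) = v ↔ x = v := by
      rw [Equiv.symm_apply_eq, hθY v hvY, ψ.injective.eq_iff]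
    simp only [Set.mem_symmDiff, Set.mem_preimage, Equiv.Perm.coe_inv, Set.mem_singleton_iff, hx,
      Finset.coe_insert, Set.mem_insert_iff, Finset.mem_coe]
    by_cases hxv : x = v <;> simp [hxv, hvB]

end BipartiteGraph

/-- **Theorem 4.2.** Let `m, n > 2`.  There exists an integer `s(m, n)` such
that every `f ∈ F(S_{l,r}(Γ))` (represented as the restriction of a member `g`
of `S_{l,r}(Γ)` to a finite set `Z`) whose domain has at least `s(m, n)`
vertices on each side admits an `(m × n)`-analysis. -/
theorem exists_mn_analysis {V : Type*} (Γ : BipartiteGraph V) (hΓ : Γ.IsRandom)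
    (m n : ℕ) (hm : 2 < m) (hn : 2 < n) :
    ∃ s : ℕ, ∀ g ∈ Γ.switchGroup {BSide.l, BSide.r}, ∀ Z : Finset V,
      s ≤ ((Z : Set V) ∩ Γ.left).ncard → s ≤ ((Z : Set V) ∩ Γ.right).ncard →
      BipartiteGraph.HasMNAnalysis Γ g Z m n := by
  classical
  refine ⟨2 * max m n, fun g hg Z hl hr => ?_⟩
  obtain ⟨A, hA⟩ := (Γ.switchGroup_le_localSwitchGroup _ hg).2 Z
  obtain ⟨B, hBZ, hY₀, ε, hgB⟩ := hA.exists_small_switchSet (m := m) (n := n) (by omega) (by omega)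
  obtain ⟨ψ, hψ, hψB⟩ := hΓ.exists_mem_switchGroup_isSwitch B
  obtain ⟨θ, hθ, hθψ⟩ := hΓ.exists_inAutStar_comp_eq
    (BipartiteGraph.mem_symLR_of_mem_switchGroup hg) hψB.1 ε fun a ha b hb => by
      rw [(BipartiteGraph.isSwitch_iff.1 hψB).2 a ha.2 b hb.2, hgB a ha b hb]
      tauto
  exact (hΓ.hasAnalysisFrom (by omega) (by omega) hBZ hY₀ hψ (hψB.isSwitchOn Z)).hasMNAnalysis
    hθ hθψ
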